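/- Let H be a complex Hilbert space, G a bounded selfadjoint operator with decomposition H = H₊ ⊕ H₋ ⊕ N(G) and G = G₊ ⊕ (−G₋) ⊕ 0, G± positive definite with ‖G₊‖ = ‖G₋‖ = 1/κ. Write u₀ = v⁺ + w⁺ + v⁻ + w⁻ + u₀⁰ with v± ∈ N± = ker(I ∓ κG), w± ∈ H± ⊖ N±, u₀⁰ ∈ N(G). If v⁺ ≠ 0 and v⁻ ≠ 0, then there exists γ ∈ (−κ, κ) such that y₀ := (I + γG)⁻¹ u₀ satisfies ⟨G y₀, y₀⟩ = 0, and the set {y ∈ Q(G) : (I + γ'G)y = u₀ for some γ' ∈ [−κ, κ]} equals the singleton {(I + γG)⁻¹ u₀}. -/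

import Mathlib

/-!
For `|γ| < κ` the operator `1 + γG` is invertible, since `‖G‖ ≤ 1/κ`, so
`y(γ) = (1 + γG)⁻¹ u₀` and `f(γ) = ⟪G y(γ), y(γ)⟫` are continuous on `(-κ, κ)`. The
`N₋`-component of `y(γ)` is `v⁻ / (1 - γ/κ)`, which blows up as `γ → κ`, while for `γ ≥ 0` the
`H₊`-component stays bounded by `‖v⁺ + w⁺‖`; by the definiteness of `G₋` this makes `f(γ) < 0`
near `κ`. Symmetrically (replace `G` by `-G`) `f(γ) > 0` near `-κ`, and the intermediate value
theorem gives the interior `γ`.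

For uniqueness, let `(1 + γG) y₀ = (1 + γ'G) y` with `y₀, y ∈ Q(G)` and put `d = y - y₀`. Then
`Re⟪(1 + γG) d, d⟫ + Re⟪(1 + γ'G) d, d⟫ = (γ - γ') (Re⟪G y, y⟫ - Re⟪G y₀, y₀⟫) = 0`, both terms
are nonnegative for `|γ|, |γ'| ≤ κ`, and the first is at least `(1 - |γ|/κ) ‖d‖²`.
-/

open scoped InnerProductSpace

theorem exists_pos_le_one_sq_mul_lt {B C : ℝ} (hB : 0 < B) (hC : 0 ≤ C) :
    ∃ s : ℝ, 0 < s ∧ s ≤ 1 ∧ s ^ 2 * C < B := by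
  have hs1 : B / (C + B) ≤ 1 := div_le_one_of_le₀ (by linarith) (by positivity)
  refine ⟨B / (C + B), by positivity, hs1, ?_⟩
  calc (B / (C + B)) ^ 2 * C ≤ B / (C + B) * C := by
        gcongr; exact pow_le_of_le_one (by positivity) hs1 two_ne_zero
    _ = B * (C / (C + B)) := by ring
    _ < B * 1 := by gcongr; exact (div_lt_one (by positivity)).2 (by linarith)
    _ = B := mul_one B

theorem mul_lt_one_of_lt_of_le_inv {a b κ : ℝ} (hκ : 0 < κ) (ha : 0 ≤ a) (hab : a < κ)
    (hb : b ≤ κ⁻¹) : a * b < 1 :=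
  calc a * b ≤ a * κ⁻¹ := by gcongr
    _ < κ * κ⁻¹ := by gcongr
    _ = 1 := mul_inv_cancel₀ hκ.ne'

theorem mul_le_one_of_le_of_le_inv {a b κ : ℝ} (hκ : 0 < κ) (ha : 0 ≤ a) (hab : a ≤ κ)
    (hb : b ≤ κ⁻¹) : a * b ≤ 1 :=
  calc a * b ≤ a * κ⁻¹ := by gcongr
    _ ≤ κ * κ⁻¹ := by gcongr
    _ = 1 := mul_inv_cancel₀ hκ.ne'

section InnerProduct

variable {𝕜 E : Type*} [RCLike 𝕜] [NormedAddCommGroup E] [InnerProductSpace 𝕜 E]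

theorem norm_le_norm_add_of_re_inner_nonneg {x w : E} (h : 0 ≤ RCLike.re ⟪w, x⟫_𝕜) :
    ‖x‖ ≤ ‖x + w‖ := by
  refine (pow_le_pow_iff_left₀ (norm_nonneg _) (norm_nonneg _) two_ne_zero).1 ?_
  rw [norm_add_sq (𝕜 := 𝕜), inner_re_symm]
  nlinarith [sq_nonneg ‖w‖]

theorem norm_add_add_sq_of_inner_eq_zero {a b c : E} (hab : ⟪a, b⟫_𝕜 = 0) (hac : ⟪a, c⟫_𝕜 = 0)
    (hbc : ⟪b, c⟫_𝕜 = 0) : ‖a + b + c‖ ^ 2 = ‖a‖ ^ 2 + ‖b‖ ^ 2 + ‖c‖ ^ 2 := by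
  have habc : ⟪a + b, c⟫_𝕜 = 0 := by rw [inner_add_left, hac, hbc, add_zero]
  simp only [sq, norm_add_sq_eq_norm_sq_add_norm_sq_of_inner_eq_zero _ _ habc,
    norm_add_sq_eq_norm_sq_add_norm_sq_of_inner_eq_zero _ _ hab]

end InnerProduct

section Operator

variable {H : Type*} [NormedAddCommGroup H] [InnerProductSpace ℂ H]

theorem re_inner_self_eq_norm_sq (x : H) : (⟪x, x⟫_ℂ).re = ‖x‖ ^ 2 := by
  simpa using inner_self_eq_norm_sq (𝕜 := ℂ) x

theorem re_inner_ofReal_smul_left (t : ℝ) (x y : H) :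
    (⟪(t : ℂ) • x, y⟫_ℂ).re = t * (⟪x, y⟫_ℂ).re := by
  rw [inner_smul_left, Complex.conj_ofReal, Complex.re_ofReal_mul]

theorem abs_re_inner_apply_self_le (G : H →L[ℂ] H) (x : H) :
    |(⟪G x, x⟫_ℂ).re| ≤ ‖G‖ * ‖x‖ ^ 2 :=
  calc |(⟪G x, x⟫_ℂ).re| ≤ ‖G x‖ * ‖x‖ :=
        (Complex.abs_re_le_norm _).trans (norm_inner_le_norm _ _)
    _ ≤ ‖G‖ * ‖x‖ * ‖x‖ := by gcongr; exact G.le_opNorm x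
    _ = ‖G‖ * ‖x‖ ^ 2 := by ring

theorem norm_le_norm_add_smul_apply {G : H →L[ℂ] H} {x : H} (hx : 0 ≤ (⟪G x, x⟫_ℂ).re) {t : ℝ}
    (ht : 0 ≤ t) : ‖x‖ ≤ ‖x + (t : ℂ) • G x‖ :=
  norm_le_norm_add_of_re_inner_nonneg (𝕜 := ℂ) <| by
    rw [RCLike.re_to_complex, re_inner_ofReal_smul_left]; exact mul_nonneg ht hx

theorem mul_norm_sq_le_re_inner_add_smul_apply (G : H →L[ℂ] H) (t : ℝ) (x : H) :
    (1 - |t| * ‖G‖) * ‖x‖ ^ 2 ≤ (⟪x + (t : ℂ) • G x, x⟫_ℂ).re := by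
  rw [inner_add_left, Complex.add_re, re_inner_self_eq_norm_sq, re_inner_ofReal_smul_left]
  have h := neg_abs_le (t * (⟪G x, x⟫_ℂ).re)
  rw [abs_mul] at h
  nlinarith [mul_le_mul_of_nonneg_left (abs_re_inner_apply_self_le G x) (abs_nonneg t)]

theorem eq_of_add_smul_apply_eq_of_re_inner_eq {G : H →L[ℂ] H}
    (hG : (G : H →ₗ[ℂ] H).IsSymmetric) {κ : ℝ} (hκ : 0 < κ) (hGnorm : ‖G‖ ≤ κ⁻¹) {γ γ' : ℝ}
    (hγ : |γ| < κ) (hγ' : |γ'| ≤ κ) {y y' : H} (h : y' + (γ' : ℂ) • G y' = y + (γ : ℂ) • G y)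
    (hq : (⟪G y', y'⟫_ℂ).re = (⟪G y, y⟫_ℂ).re) : y' = y := by
  set d := y' - y
  have hA : d + (γ : ℂ) • G d = ((γ - γ' : ℝ) : ℂ) • G y' := by
    simp only [d, map_sub]; push_cast; linear_combination (norm := module) h
  have hA' : d + (γ' : ℂ) • G d = ((γ - γ' : ℝ) : ℂ) • G y := by
    simp only [d, map_sub]; push_cast; linear_combination (norm := module) h
  have hsymm : (⟪G y', y⟫_ℂ).re = (⟪G y, y'⟫_ℂ).re := by
    rw [← ContinuousLinearMap.coe_coe, hG, ContinuousLinearMap.coe_coe, ← inner_conj_symm,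
      Complex.conj_re]
  have hsum : (⟪d + (γ : ℂ) • G d, d⟫_ℂ).re + (⟪d + (γ' : ℂ) • G d, d⟫_ℂ).re = 0 := by
    rw [hA, hA', re_inner_ofReal_smul_left, re_inner_ofReal_smul_left]
    simp only [d, inner_sub_right, Complex.sub_re]
    rw [hq, hsymm]; ring
  have h₁ := mul_norm_sq_le_re_inner_add_smul_apply G γ d
  have h₂ := mul_norm_sq_le_re_inner_add_smul_apply G γ' d
  have hc₁ := mul_lt_one_of_lt_of_le_inv hκ (abs_nonneg γ) hγ hGnorm
  have hc₂ := mul_le_one_of_le_of_le_inv hκ (abs_nonneg γ') hγ' hGnorm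
  have hd : ‖d‖ ^ 2 ≤ 0 := by
    nlinarith [sq_nonneg ‖d‖, mul_nonneg (sub_nonneg.2 hc₂) (sq_nonneg ‖d‖)]
  exact sub_eq_zero.1 <| norm_eq_zero.1 <|
    (pow_eq_zero_iff two_ne_zero).1 (le_antisymm hd (sq_nonneg _))

theorem inner_add_smul_apply_of_apply_eq_smul {G : H →L[ℂ] H} (hG : (G : H →ₗ[ℂ] H).IsSymmetric)
    {μ : ℝ} {v : H} (hv : G v = (μ : ℂ) • v) (t : ℝ) (x : H) :
    ⟪x + (t : ℂ) • G x, v⟫_ℂ = ((1 + t * μ : ℝ) : ℂ) * ⟪x, v⟫_ℂ := by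
  have hGv : ⟪G x, v⟫_ℂ = μ * ⟪x, v⟫_ℂ := by
    rw [← ContinuousLinearMap.coe_coe, hG, ContinuousLinearMap.coe_coe, hv, inner_smul_right]
  rw [inner_add_left, inner_smul_left, Complex.conj_ofReal, hGv]
  push_cast
  ring

theorem norm_le_abs_mul_norm_of_add_smul_apply_eq {G : H →L[ℂ] H}
    (hG : (G : H →ₗ[ℂ] H).IsSymmetric) {μ : ℝ} {v w x : H} (hv : G v = (μ : ℂ) • v)
    (hwv : ⟪w, v⟫_ℂ = 0) {t : ℝ} (hx : x + (t : ℂ) • G x = v + w) :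
    ‖v‖ ≤ |1 + t * μ| * ‖x‖ := by
  have h : ((‖v‖ ^ 2 : ℝ) : ℂ) = ((1 + t * μ : ℝ) : ℂ) * ⟪x, v⟫_ℂ := by
    rw [← inner_add_smul_apply_of_apply_eq_smul hG hv, hx, inner_add_left, hwv, add_zero,
      inner_self_eq_norm_sq_to_K]
    push_cast; rfl
  have hle : ‖v‖ * ‖v‖ ≤ |1 + t * μ| * ‖x‖ * ‖v‖ :=
    calc ‖v‖ * ‖v‖ = ‖((1 + t * μ : ℝ) : ℂ) * ⟪x, v⟫_ℂ‖ := by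
          rw [← h, Complex.norm_real, Real.norm_eq_abs, abs_of_nonneg (by positivity), sq]
      _ ≤ |1 + t * μ| * (‖x‖ * ‖v‖) := by
          rw [norm_mul, Complex.norm_real, Real.norm_eq_abs]; gcongr; exact norm_inner_le_norm _ _
      _ = |1 + t * μ| * ‖x‖ * ‖v‖ := by ring
  rcases (norm_nonneg v).eq_or_lt with h0 | hpos
  · rw [← h0]; positivity
  · exact le_of_mul_le_mul_right hle hpos

theorem apply_eq_smul_of_mem_ker_one_add_smul {G : H →L[ℂ] H} {κ : ℝ} (hκ : κ ≠ 0) {v : H}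
    (hv : v ∈ LinearMap.ker (((1 : H →L[ℂ] H) + (κ : ℂ) • G : H →L[ℂ] H) : H →ₗ[ℂ] H)) :
    G v = ((-κ⁻¹ : ℝ) : ℂ) • v := by
  simp only [LinearMap.mem_ker, ContinuousLinearMap.coe_coe, add_apply,
    one_apply_eq_self, smul_apply] at hv
  have hκv : (κ : ℂ) • G v = -v := eq_neg_of_add_eq_zero_right hv
  rw [← inv_smul_smul₀ (Complex.ofReal_ne_zero.2 hκ) (G v), hκv]
  push_cast
  rw [smul_neg, neg_smul]

theorem norm_apply_le_of_mem_upperBounds {G : H →L[ℂ] H} {S : Submodule ℂ H} {c : ℝ}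
    (hc0 : 0 ≤ c) (hc : c ∈ upperBounds {r : ℝ | ∃ x ∈ S, ‖x‖ = 1 ∧ r = ‖G x‖}) {x : H}
    (hx : x ∈ S) : ‖G x‖ ≤ c * ‖x‖ := by
  have h : ‖G ∘L S.subtypeL‖ ≤ c :=
    ContinuousLinearMap.opNorm_le_of_unit_norm hc0 fun y hy => hc ⟨y, y.2, hy, rfl⟩
  simpa using (G ∘L S.subtypeL).le_of_opNorm_le h ⟨x, hx⟩

/-- The splitting `H = H₊ ⊕ H₋ ⊕ N(G)`, `G = G₊ ⊕ (-G₋) ⊕ 0` with `G₊, G₋ ≥ 0`. -/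
structure IsSignDecomposition (G : H →L[ℂ] H) (Hp Hm : Submodule ℂ H) : Prop where
  inner_pm : ∀ x ∈ Hp, ∀ y ∈ Hm, ⟪x, y⟫_ℂ = 0
  inner_p_ker : ∀ x ∈ Hp, ∀ y, G y = 0 → ⟪x, y⟫_ℂ = 0
  inner_m_ker : ∀ x ∈ Hm, ∀ y, G y = 0 → ⟪x, y⟫_ℂ = 0
  exists_eq_add : ∀ x, ∃ p ∈ Hp, ∃ m ∈ Hm, ∃ z, G z = 0 ∧ x = p + m + z
  map_mem_p : ∀ x ∈ Hp, G x ∈ Hp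
  map_mem_m : ∀ x ∈ Hm, G x ∈ Hm
  re_inner_nonneg_p : ∀ x ∈ Hp, 0 ≤ (⟪G x, x⟫_ℂ).re
  re_inner_nonpos_m : ∀ x ∈ Hm, (⟪G x, x⟫_ℂ).re ≤ 0

namespace IsSignDecomposition

variable {G : H →L[ℂ] H} {Hp Hm : Submodule ℂ H}

theorem neg (D : IsSignDecomposition G Hp Hm) : IsSignDecomposition (-G) Hm Hp where
  inner_pm x hx y hy := inner_eq_zero_symm.1 (D.inner_pm y hy x hx)
  inner_p_ker x hx y hy := D.inner_m_ker x hx y (neg_eq_zero.1 hy)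
  inner_m_ker x hx y hy := D.inner_p_ker x hx y (neg_eq_zero.1 hy)
  exists_eq_add x := by
    obtain ⟨p, hp, m, hm, z, hz, rfl⟩ := D.exists_eq_add x
    exact ⟨m, hm, p, hp, z, by simp [hz], by abel⟩
  map_mem_p x hx := Hm.neg_mem (D.map_mem_m x hx)
  map_mem_m x hx := Hp.neg_mem (D.map_mem_p x hx)
  re_inner_nonneg_p x hx := by simpa using D.re_inner_nonpos_m x hx
  re_inner_nonpos_m x hx := by simpa using D.re_inner_nonneg_p x hx

variable (D : IsSignDecomposition G Hp Hm)
include D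

theorem norm_add_add_sq {p m z : H} (hp : p ∈ Hp) (hm : m ∈ Hm) (hz : G z = 0) :
    ‖p + m + z‖ ^ 2 = ‖p‖ ^ 2 + ‖m‖ ^ 2 + ‖z‖ ^ 2 :=
  norm_add_add_sq_of_inner_eq_zero (D.inner_pm p hp m hm) (D.inner_p_ker p hp z hz)
    (D.inner_m_ker m hm z hz)

theorem eq_of_add_add_eq {p p' m m' z z' : H} (hp : p ∈ Hp) (hp' : p' ∈ Hp) (hm : m ∈ Hm)
    (hm' : m' ∈ Hm) (hz : G z = 0) (hz' : G z' = 0) (h : p + m + z = p' + m' + z') :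
    p = p' ∧ m = m' ∧ z = z' := by
  have hsq := D.norm_add_add_sq (Hp.sub_mem hp hp') (Hm.sub_mem hm hm')
    (show G (z - z') = 0 by rw [map_sub, hz, hz', sub_zero])
  rw [show p - p' + (m - m') + (z - z') = 0 by rw [← sub_eq_zero.2 h]; abel, norm_zero] at hsq
  have hsq0 : ‖p - p'‖ ^ 2 = 0 ∧ ‖m - m'‖ ^ 2 = 0 ∧ ‖z - z'‖ ^ 2 = 0 := by
    refine ⟨?_, ?_, ?_⟩ <;> linarith [sq_nonneg ‖p - p'‖, sq_nonneg ‖m - m'‖, sq_nonneg ‖z - z'‖]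
  simpa only [sq_eq_zero_iff, norm_eq_zero, sub_eq_zero] using hsq0

theorem re_inner_apply_add_add {p m z : H} (hp : p ∈ Hp) (hm : m ∈ Hm) (hz : G z = 0) :
    (⟪G (p + m + z), p + m + z⟫_ℂ).re = (⟪G p, p⟫_ℂ).re + (⟪G m, m⟫_ℂ).re := by
  have hGp := D.map_mem_p p hp
  have hGm := D.map_mem_m m hm
  simp only [map_add, hz, add_zero, inner_add_left, inner_add_right, D.inner_pm _ hGp _ hm,
    D.inner_p_ker _ hGp _ hz, D.inner_m_ker _ hGm _ hz,
    inner_eq_zero_symm.1 (D.inner_pm _ hp _ hGm),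
    Complex.add_re, Complex.zero_re]
  ring

theorem opNorm_le {C : ℝ} (hC : 0 ≤ C) (hp : ∀ x ∈ Hp, ‖G x‖ ≤ C * ‖x‖)
    (hm : ∀ x ∈ Hm, ‖G x‖ ≤ C * ‖x‖) : ‖G‖ ≤ C := by
  refine G.opNorm_le_bound hC fun x => ?_
  obtain ⟨p, hp', m, hm', z, hz, rfl⟩ := D.exists_eq_add x
  have hGx : G (p + m + z) = G p + G m + 0 := by simp [hz]
  have hGp := pow_le_pow_left₀ (norm_nonneg _) (hp p hp') 2
  have hGm := pow_le_pow_left₀ (norm_nonneg _) (hm m hm') 2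
  refine (pow_le_pow_iff_left₀ (norm_nonneg _) (by positivity) two_ne_zero).1 ?_
  rw [hGx, D.norm_add_add_sq (D.map_mem_p p hp') (D.map_mem_m m hm') (map_zero G), mul_pow,
    D.norm_add_add_sq hp' hm' hz, norm_zero]
  rw [mul_pow] at hGp hGm
  nlinarith [mul_nonneg (sq_nonneg C) (sq_nonneg ‖z‖)]

theorem mem_p_of_apply_eq_smul {μ : ℝ} (hμ : 0 < μ) {v : H} (hv : G v = (μ : ℂ) • v) :
    v ∈ Hp := by
  obtain ⟨p, hp, m, hm, z, hz, rfl⟩ := D.exists_eq_add v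
  have hμ' : (μ : ℂ) ≠ 0 := Complex.ofReal_ne_zero.2 hμ.ne'
  obtain ⟨-, hGm, hz0⟩ := D.eq_of_add_add_eq (D.map_mem_p p hp) (Hp.smul_mem (μ : ℂ) hp)
    (D.map_mem_m m hm) (Hm.smul_mem (μ : ℂ) hm) (map_zero G)
    (show G ((μ : ℂ) • z) = 0 by rw [map_smul, hz, smul_zero])
    (by simpa [hz, smul_add] using hv)
  have hm0 : m = 0 := by
    have h := D.re_inner_nonpos_m m hm
    rw [hGm, re_inner_ofReal_smul_left, re_inner_self_eq_norm_sq] at h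
    exact norm_eq_zero.1 <| (pow_eq_zero_iff two_ne_zero).1 <|
      le_antisymm (by nlinarith) (sq_nonneg _)
  rw [hm0, (smul_eq_zero_iff_right hμ').1 hz0.symm, add_zero, add_zero]
  exact hp

theorem mem_m_of_apply_eq_smul {μ : ℝ} (hμ : μ < 0) {v : H} (hv : G v = (μ : ℂ) • v) :
    v ∈ Hm :=
  D.neg.mem_p_of_apply_eq_smul (neg_pos.2 hμ) (by rw [neg_apply, hv]; push_cast; rw [neg_smul])

theorem sq_mul_re_inner_le (hG : (G : H →ₗ[ℂ] H).IsSymmetric) {β : ℝ} (hβ : 0 ≤ β)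
    (hβm : ∀ x ∈ Hm, (⟪G x, x⟫_ℂ).re ≤ -(β * ‖x‖ ^ 2)) {μ : ℝ} {u v w z y : H} (hu : u ∈ Hp)
    (hv : v ∈ Hm) (hw : w ∈ Hm) (hz : G z = 0) (hGv : G v = (μ : ℂ) • v) (hwv : ⟪w, v⟫_ℂ = 0)
    {γ : ℝ} (hγ : 0 ≤ γ) (hy : y + (γ : ℂ) • G y = u + (v + w) + z) :
    (1 + γ * μ) ^ 2 * (⟪G y, y⟫_ℂ).re ≤ (1 + γ * μ) ^ 2 * (‖G‖ * ‖u‖ ^ 2) - β * ‖v‖ ^ 2 := by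
  obtain ⟨a, ha, b, hb, c, hc, rfl⟩ := D.exists_eq_add y
  obtain ⟨hau, hbvw, -⟩ := D.eq_of_add_add_eq
    (Hp.add_mem ha (Hp.smul_mem _ (D.map_mem_p a ha))) hu
    (Hm.add_mem hb (Hm.smul_mem _ (D.map_mem_m b hb))) (Hm.add_mem hv hw) hc hz
    (by rw [← hy, map_add, map_add, hc]; module)
  have ha_le : (⟪G a, a⟫_ℂ).re ≤ ‖G‖ * ‖u‖ ^ 2 :=
    calc (⟪G a, a⟫_ℂ).re ≤ ‖G‖ * ‖a‖ ^ 2 := (le_abs_self _).trans (abs_re_inner_apply_self_le G a)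
      _ ≤ ‖G‖ * ‖u‖ ^ 2 := by
        gcongr
        rw [← hau]
        exact norm_le_norm_add_smul_apply (D.re_inner_nonneg_p a ha) hγ
  have hb_ge : ‖v‖ ^ 2 ≤ (1 + γ * μ) ^ 2 * ‖b‖ ^ 2 := by
    rw [← sq_abs (1 + γ * μ), ← mul_pow]
    gcongr
    exact norm_le_abs_mul_norm_of_add_smul_apply_eq hG hGv hwv hbvw
  rw [D.re_inner_apply_add_add ha hb hc]
  nlinarith [mul_le_mul_of_nonneg_left ha_le (sq_nonneg (1 + γ * μ)),
    mul_le_mul_of_nonneg_left hb_ge hβ,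
    mul_le_mul_of_nonneg_left (hβm b hb) (sq_nonneg (1 + γ * μ))]

end IsSignDecomposition

/-- `(1 + γG)⁻¹ u`, with the junk value `0` when `1 + γG` is not invertible. -/
noncomputable def resolventApply (G : H →L[ℂ] H) (u : H) (γ : ℝ) : H :=
  Ring.inverse (1 + (γ : ℂ) • G) u

theorem resolventApply_neg (G : H →L[ℂ] H) (u : H) (γ : ℝ) :
    resolventApply (-G) u γ = resolventApply G u (-γ) := by
  simp [resolventApply]

theorem resolventApply_add_smul_apply {G : H →L[ℂ] H} {γ : ℝ} (h : IsUnit (1 + (γ : ℂ) • G))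
    (u : H) :
    resolventApply G u γ + (γ : ℂ) • G (resolventApply G u γ) = u := by
  simpa [resolventApply] using congrArg (fun T : H →L[ℂ] H => T u) (Ring.mul_inverse_cancel _ h)

section Complete

variable [CompleteSpace H] {G : H →L[ℂ] H} {κ : ℝ}

theorem isUnit_one_add_smul (hκ : 0 < κ) (hG : ‖G‖ ≤ κ⁻¹) {γ : ℝ} (hγ : |γ| < κ) :
    IsUnit (1 + (γ : ℂ) • G) := by
  have h : ‖-((γ : ℂ) • G)‖ < 1 := by
    rw [norm_neg, norm_smul, Complex.norm_real, Real.norm_eq_abs]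
    exact mul_lt_one_of_lt_of_le_inv hκ (abs_nonneg γ) hγ hG
  simpa using isUnit_one_sub_of_norm_lt_one h

theorem continuousAt_resolventApply {γ : ℝ} (h : IsUnit (1 + (γ : ℂ) • G)) (u : H) :
    ContinuousAt (resolventApply G u) γ := by
  have hline : Continuous fun t : ℝ => (1 : H →L[ℂ] H) + (t : ℂ) • G := by fun_prop
  have hinv := NormedRing.inverse_continuousAt h.unit
  rw [IsUnit.unit_spec] at hinv
  exact (ContinuousLinearMap.apply ℂ H u).continuous.continuousAt.comp
    (hinv.comp (f := fun t : ℝ => (1 : H →L[ℂ] H) + (t : ℂ) • G) hline.continuousAt)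

namespace IsSignDecomposition

variable {Hp Hm : Submodule ℂ H} (D : IsSignDecomposition G Hp Hm)
include D

theorem exists_reApplyInnerSelf_resolventApply_neg (hG : (G : H →ₗ[ℂ] H).IsSymmetric)
    (hκ : 0 < κ) (hGnorm : ‖G‖ ≤ κ⁻¹) {β : ℝ} (hβ : 0 < β)
    (hβm : ∀ x ∈ Hm, (⟪G x, x⟫_ℂ).re ≤ -(β * ‖x‖ ^ 2)) {u v w z : H} (hu : u ∈ Hp)
    (hw : w ∈ Hm) (hz : G z = 0) (hGv : G v = ((-κ⁻¹ : ℝ) : ℂ) • v) (hwv : ⟪w, v⟫_ℂ = 0)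
    (hv0 : v ≠ 0) :
    ∃ γ ∈ Set.Ico 0 κ, G.reApplyInnerSelf (resolventApply G (u + (v + w) + z) γ) < 0 := by
  have hv : v ∈ Hm := D.mem_m_of_apply_eq_smul (by simpa using hκ) hGv
  obtain ⟨s, hs0, hs1, hs⟩ := exists_pos_le_one_sq_mul_lt (C := ‖G‖ * ‖u‖ ^ 2)
    (by positivity : 0 < β * ‖v‖ ^ 2) (by positivity)
  have hγ : κ * (1 - s) ∈ Set.Ico 0 κ := ⟨by nlinarith, by nlinarith⟩
  refine ⟨_, hγ, ?_⟩
  have hunit := isUnit_one_add_smul hκ hGnorm (γ := κ * (1 - s))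
    (by rw [abs_of_nonneg hγ.1]; exact hγ.2)
  have key := D.sq_mul_re_inner_le hG hβ.le hβm hu hv hw hz hGv hwv hγ.1
    (resolventApply_add_smul_apply hunit _)
  rw [show 1 + κ * (1 - s) * -κ⁻¹ = s by field_simp; ring] at key
  rw [ContinuousLinearMap.reApplyInnerSelf_apply, RCLike.re_to_complex]
  nlinarith [pow_pos hs0 2]

theorem exists_mem_Ioo_reApplyInnerSelf_resolventApply_eq_zero (hG : IsSelfAdjoint G)
    (hκ : 0 < κ) (hGnorm : ‖G‖ ≤ κ⁻¹) {α β : ℝ} (hα : 0 < α)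
    (hαp : ∀ x ∈ Hp, α * ‖x‖ ^ 2 ≤ (⟪G x, x⟫_ℂ).re) (hβ : 0 < β)
    (hβm : ∀ x ∈ Hm, (⟪G x, x⟫_ℂ).re ≤ -(β * ‖x‖ ^ 2)) {vp wp vm wm z : H}
    (hvp : (-G) vp = ((-κ⁻¹ : ℝ) : ℂ) • vp) (hvm : G vm = ((-κ⁻¹ : ℝ) : ℂ) • vm)
    (hwp : wp ∈ Hp) (hwm : wm ∈ Hm) (hwvp : ⟪wp, vp⟫_ℂ = 0) (hwvm : ⟪wm, vm⟫_ℂ = 0)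
    (hz : G z = 0) (hvp0 : vp ≠ 0) (hvm0 : vm ≠ 0) :
    ∃ γ ∈ Set.Ioo (-κ) κ,
      G.reApplyInnerSelf (resolventApply G (vp + wp + vm + wm + z) γ) = 0 := by
  have hκ' : -κ⁻¹ < 0 := by simpa using hκ
  obtain ⟨γ₂, hγ₂, hf₂⟩ := D.exists_reApplyInnerSelf_resolventApply_neg hG.isSymmetric hκ hGnorm
    hβ hβm (Hp.add_mem (D.neg.mem_m_of_apply_eq_smul hκ' hvp) hwp) hwm hz hvm hwvm hvm0
  obtain ⟨γ₁, hγ₁, hf₁⟩ := D.neg.exists_reApplyInnerSelf_resolventApply_neg hG.neg.isSymmetric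
    hκ (by rwa [norm_neg]) hα
    (fun x hx => by rw [neg_apply, inner_neg_left, Complex.neg_re]; linarith [hαp x hx])
    (Hm.add_mem (D.mem_m_of_apply_eq_smul hκ' hvm) hwm) hwp (by rw [neg_apply, hz, neg_zero])
    hvp hwvp hvp0
  rw [show vp + wp + (vm + wm) + z = vp + wp + vm + wm + z by abel] at hf₂
  rw [resolventApply_neg, show vm + wm + (vp + wp) + z = vp + wp + vm + wm + z by abel] at hf₁
  simp only [ContinuousLinearMap.reApplyInnerSelf_apply, neg_apply, inner_neg_left, map_neg,
    neg_neg_iff_pos] at hf₁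
  have hcont : ContinuousOn
      (fun γ => G.reApplyInnerSelf (resolventApply G (vp + wp + vm + wm + z) γ))
      (Set.Icc (-γ₁) γ₂) := fun γ hγ =>
    (G.reApplyInnerSelf_continuous.continuousAt.comp (continuousAt_resolventApply
      (isUnit_one_add_smul hκ hGnorm (γ := γ)
        (abs_lt.2 ⟨by linarith [hγ.1, hγ₁.2], by linarith [hγ.2, hγ₂.2]⟩)) _)).continuousWithinAt
  obtain ⟨γ, hγ, hfγ⟩ := intermediate_value_Icc' (by linarith [hγ₁.1, hγ₂.1]) hcont
    ⟨hf₂.le, hf₁.le⟩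
  exact ⟨γ, ⟨by linarith [hγ.1, hγ₁.2], by linarith [hγ.2, hγ₂.2]⟩, hfγ⟩

end IsSignDecomposition

end Complete

end Operator

/-- Proposition 5.3 (ii) together with Proposition 5.1: if both boundary-kernel
components `v⁺ ∈ N₊ = ker(I - κG)` and `v⁻ ∈ N₋ = ker(I + κG)` of `u₀` are nonzero,
then the multiplier is interior, `γ ∈ (-κ, κ)`, and the solution set is the singleton
`{(I + γG)⁻¹ u₀}`. -/
theorem interior_singleton_solution
    {H : Type*} [NormedAddCommGroup H] [InnerProductSpace ℂ H] [CompleteSpace H]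
    (G : H →L[ℂ] H) (hG : IsSelfAdjoint G) (κ : ℝ) (hκ : 0 < κ)
    (Hp Hm : Submodule ℂ H)
    (hpm : ∀ x ∈ Hp, ∀ y ∈ Hm, ⟪x, y⟫_ℂ = 0)
    (hp0 : ∀ x ∈ Hp, ∀ y ∈ LinearMap.ker (G : H →ₗ[ℂ] H), ⟪x, y⟫_ℂ = 0)
    (hm0 : ∀ x ∈ Hm, ∀ y ∈ LinearMap.ker (G : H →ₗ[ℂ] H), ⟪x, y⟫_ℂ = 0)
    (hspan : ∀ x : H, ∃ xp ∈ Hp, ∃ xm ∈ Hm, ∃ x0 ∈ LinearMap.ker (G : H →ₗ[ℂ] H), x = xp + xm + x0)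
    (hinvp : ∀ x ∈ Hp, G x ∈ Hp) (hinvm : ∀ x ∈ Hm, G x ∈ Hm)
    (hposp : ∃ α > 0, ∀ x ∈ Hp, α * ‖x‖ ^ 2 ≤ (⟪G x, x⟫_ℂ).re)
    (hnegm : ∃ β > 0, ∀ x ∈ Hm, (⟪G x, x⟫_ℂ).re ≤ -(β * ‖x‖ ^ 2))
    (hnormp : IsLUB {r : ℝ | ∃ x ∈ Hp, ‖x‖ = 1 ∧ r = ‖G x‖} (1 / κ))
    (hnormm : IsLUB {r : ℝ | ∃ x ∈ Hm, ‖x‖ = 1 ∧ r = ‖G x‖} (1 / κ))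
    (u₀ vp wp vm wm u₀0 : H)
    (hvp : vp ∈ LinearMap.ker (((1 : H →L[ℂ] H) - (κ : ℂ) • G : H →L[ℂ] H) : H →ₗ[ℂ] H))
    (hvm : vm ∈ LinearMap.ker (((1 : H →L[ℂ] H) + (κ : ℂ) • G : H →L[ℂ] H) : H →ₗ[ℂ] H))
    (hwp : wp ∈ Hp ∧ ∀ v ∈ LinearMap.ker (((1 : H →L[ℂ] H) - (κ : ℂ) • G : H →L[ℂ] H) : H →ₗ[ℂ] H), ⟪wp, v⟫_ℂ = 0)
    (hwm : wm ∈ Hm ∧ ∀ v ∈ LinearMap.ker (((1 : H →L[ℂ] H) + (κ : ℂ) • G : H →L[ℂ] H) : H →ₗ[ℂ] H), ⟪wm, v⟫_ℂ = 0)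
    (hu₀0 : u₀0 ∈ LinearMap.ker (G : H →ₗ[ℂ] H))
    (hdecomp : u₀ = vp + wp + vm + wm + u₀0)
    (hvp0 : vp ≠ 0) (hvm0 : vm ≠ 0) :
    ∃ γ ∈ Set.Ioo (-κ) κ, ∃ y₀ : H,
      (((1 : H →L[ℂ] H) + (γ : ℂ) • G) y₀ = u₀ ∧ ⟪G y₀, y₀⟫_ℂ = 0) ∧
      {y : H | ⟪G y, y⟫_ℂ = 0 ∧
          ∃ γ' ∈ Set.Icc (-κ) κ, ((1 : H →L[ℂ] H) + (γ' : ℂ) • G) y = u₀}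
        = {y₀} := by
  obtain ⟨α, hα, hαp⟩ := hposp
  obtain ⟨β, hβ, hβm⟩ := hnegm
  have D : IsSignDecomposition G Hp Hm :=
    { inner_pm := hpm, inner_p_ker := hp0, inner_m_ker := hm0, exists_eq_add := hspan
      map_mem_p := hinvp, map_mem_m := hinvm
      re_inner_nonneg_p := fun x hx => (by positivity : 0 ≤ α * ‖x‖ ^ 2).trans (hαp x hx)
      re_inner_nonpos_m := fun x hx => (hβm x hx).trans (by nlinarith [sq_nonneg ‖x‖]) }
  have hGnorm : ‖G‖ ≤ κ⁻¹ := by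
    rw [← one_div]
    exact D.opNorm_le (by positivity)
      (fun x => norm_apply_le_of_mem_upperBounds (by positivity) hnormp.1)
      (fun x => norm_apply_le_of_mem_upperBounds (by positivity) hnormm.1)
  obtain ⟨γ, hγ, hq⟩ := D.exists_mem_Ioo_reApplyInnerSelf_resolventApply_eq_zero hG hκ hGnorm
    hα hαp hβ hβm
    (apply_eq_smul_of_mem_ker_one_add_smul hκ.ne' (by rwa [smul_neg, ← sub_eq_add_neg]))
    (apply_eq_smul_of_mem_ker_one_add_smul hκ.ne' hvm) hwp.1 hwm.1 (hwp.2 vp hvp) (hwm.2 vm hvm)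
    hu₀0 hvp0 hvm0
  rw [← hdecomp] at hq
  set y₀ := resolventApply G u₀ γ
  have hy₀ : y₀ + (γ : ℂ) • G y₀ = u₀ :=
    resolventApply_add_smul_apply (isUnit_one_add_smul hκ hGnorm (abs_lt.2 hγ)) u₀
  have hq₀ : ⟪G y₀, y₀⟫_ℂ = 0 := by
    rw [← hG.isSymmetric.coe_reApplyInnerSelf_apply, hq, RCLike.ofReal_zero]
  refine ⟨γ, hγ, y₀, ⟨hy₀, hq₀⟩, Set.eq_singleton_iff_unique_mem.2
    ⟨⟨hq₀, γ, Set.Ioo_subset_Icc_self hγ, hy₀⟩, ?_⟩⟩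
  rintro y ⟨hq, γ', hγ', hy⟩
  exact eq_of_add_smul_apply_eq_of_re_inner_eq hG.isSymmetric hκ hGnorm (abs_lt.2 hγ)
    (abs_le.2 hγ') (hy.trans hy₀.symm) (by rw [hq, hq₀])
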